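/- arXiv:2410.00541 — 2 statements merged into one kernel-verified Lean document; each statement's English description precedes it below -/
import Mathlib

section
/- Confluence of hyperedge replacement: if e₁ and e₂ are distinct hyperedges of a hypergraph H and R₁, R₂ are hypergraphs with type(Rᵢ) = type(eᵢ), then replacing e₁ first and then e₂ yields the same hypergraph (up to isomorphism) as replacing e₂ first and then e₁, and both equal the simultaneous replacement H[e₁/R₁, e₂/R₂]. -/
/-- A hypergraph over a label set `C`: finite sets of vertices and hyperedges,
an attachment list and a label for each hyperedge, and a duplicate-free list of
external nodes. -/
structure HGraph (C : Type) : Type 1 where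
  V : Type
  E : Type
  finV : Finite V
  finE : Finite E
  att : E → List V
  lab : E → C
  ext : List V
  ext_nodup : ext.Nodup

namespace HGraph

variable {C : Type}

/-- The size `|H| = |V_H| + |E_H|` of a hypergraph. -/
noncomputable def size (H : HGraph C) : ℕ := Nat.card H.V + Nat.card H.E

/-- Replacement `H[e/R]`: remove the hyperedge `e`, disjointly add the vertices and
hyperedges of `R`, and fuse the `i`-th external node of `R` with the `i`-th
attachment node of `e`. -/
noncomputable def replace (H : HGraph C) (e : H.E) (R : HGraph C)
    (hlen : R.ext.length = (H.att e).length) : HGraph C := by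
  classical
  exact
    { V := H.V ⊕ {v : R.V // v ∉ R.ext}
      E := {e' : H.E // e' ≠ e} ⊕ R.E
      finV := by haveI := H.finV; haveI := R.finV; infer_instance
      finE := by haveI := H.finE; haveI := R.finE; infer_instance
      att := fun x =>
        match x with
        | Sum.inl e' => (H.att e'.1).map Sum.inl
        | Sum.inr f => (R.att f).map (fun v =>
            if hv : v ∈ R.ext then
              Sum.inl ((H.att e).get ⟨R.ext.idxOf v, hlen ▸ List.idxOf_lt_length_iff.mpr hv⟩)
            else Sum.inr ⟨v, hv⟩)
      lab := fun x => match x with | Sum.inl e' => H.lab e'.1 | Sum.inr f => R.lab f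
      ext := H.ext.map Sum.inl
      ext_nodup := List.Nodup.map Sum.inl_injective H.ext_nodup }

/-- Isomorphism of hypergraphs. -/
structure Iso (H K : HGraph C) where
  vEquiv : H.V ≃ K.V
  eEquiv : H.E ≃ K.E
  att_eq : ∀ e, (H.att e).map vEquiv = K.att (eEquiv e)
  lab_eq : ∀ e, H.lab e = K.lab (eEquiv e)
  ext_eq : H.ext.map vEquiv = K.ext

def Iso.refl (H : HGraph C) : Iso H H :=
  ⟨Equiv.refl _, Equiv.refl _, by simp, by simp, by simp⟩

def Iso.symm {H K : HGraph C} (i : Iso H K) : Iso K H where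
  vEquiv := i.vEquiv.symm
  eEquiv := i.eEquiv.symm
  att_eq e := by
    have h := i.att_eq (i.eEquiv.symm e)
    simp only [Equiv.apply_symm_apply] at h
    rw [← h, List.map_map]
    simp
  lab_eq e := by
    have h := i.lab_eq (i.eEquiv.symm e)
    simp only [Equiv.apply_symm_apply] at h
    exact h.symm
  ext_eq := by
    rw [← i.ext_eq, List.map_map]
    simp

def Iso.trans {H K L : HGraph C} (i : Iso H K) (j : Iso K L) : Iso H L where
  vEquiv := i.vEquiv.trans j.vEquiv
  eEquiv := i.eEquiv.trans j.eEquiv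
  att_eq e := by
    simp only [Equiv.coe_trans, ← List.map_map, i.att_eq, j.att_eq]
    rfl
  lab_eq e := (i.lab_eq e).trans (j.lab_eq (i.eEquiv e))
  ext_eq := by
    simp only [Equiv.coe_trans, ← List.map_map, i.ext_eq, j.ext_eq]

/-- Hypergraphs up to isomorphism. -/
def isoSetoid (C : Type) : Setoid (HGraph C) :=
  ⟨fun H K => Nonempty (Iso H K),
   ⟨fun H => ⟨Iso.refl H⟩, fun ⟨i⟩ => ⟨i.symm⟩, fun ⟨i⟩ ⟨j⟩ => ⟨i.trans j⟩⟩⟩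

/-- The handle `A•` of a label `A` of type `n`: one hyperedge labelled `A`
attached to `n` pairwise distinct nodes, all of them external. -/
def handle (A : C) (n : ℕ) : HGraph C where
  V := Fin n
  E := PUnit
  finV := inferInstance
  finE := inferInstance
  att _ := List.finRange n
  lab _ := A
  ext := List.finRange n
  ext_nodup := List.nodup_finRange n

/-- `K` is (isomorphic to) the result of replacing `e` by `R` in `H`. -/
def IsRepl (H : HGraph C) (e : H.E) (R K : HGraph C) : Prop :=
  ∃ hlen : R.ext.length = (H.att e).length, Nonempty (Iso K (H.replace e R hlen))

/-- A direct derivation step using some production of `P`. -/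
def Step (P : Set (C × HGraph C)) (H K : HGraph C) : Prop :=
  ∃ p ∈ P, ∃ e : H.E, H.lab e = p.1 ∧ IsRepl H e p.2 K

/-- Derivations: the reflexive-transitive closure of `Step`. -/
def Derives (P : Set (C × HGraph C)) : HGraph C → HGraph C → Prop :=
  Relation.ReflTransGen (Step P)

/-- All hyperedges of `H` carry terminal labels. -/
def TerminalGraph (Tm : Set C) (H : HGraph C) : Prop := ∀ e : H.E, H.lab e ∈ Tm

/-- The language generated from the handle of `S` (of type `tyS`). -/
def Lang (P : Set (C × HGraph C)) (Tm : Set C) (S : C) (tyS : ℕ) :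
    Set (HGraph C) :=
  {H | Derives P (handle S tyS) H ∧ TerminalGraph Tm H}

end HGraph
namespace HGraph

variable {C : Type}

/-- Simultaneous replacement `H[repl]` of the set `B` of hyperedges of `H`:
each `e ∈ B` is removed, the vertices and hyperedges of `repl e` are disjointly
added, and the `i`-th external node of `repl e` is fused with the `i`-th
attachment node of `e`. -/
noncomputable def replaceSet (H : HGraph C) (B : Set H.E) (repl : H.E → HGraph C)
    (hlen : ∀ e ∈ B, (repl e).ext.length = (H.att e).length) : HGraph C := by
  classical
  exact
    { V := H.V ⊕ Σ e : B, {v : (repl e.1).V // v ∉ (repl e.1).ext}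
      E := {e : H.E // e ∉ B} ⊕ Σ e : B, (repl e.1).E
      finV := by
        haveI := H.finV; haveI := H.finE
        haveI : ∀ e : B, Finite {v : (repl e.1).V // v ∉ (repl e.1).ext} := by
          intro e; haveI := (repl e.1).finV; infer_instance
        infer_instance
      finE := by
        haveI := H.finE
        haveI : ∀ e : B, Finite (repl e.1).E := fun e => (repl e.1).finE
        infer_instance
      att := fun x =>
        match x with
        | Sum.inl e' => (H.att e'.1).map Sum.inl
        | Sum.inr ⟨e, f⟩ => ((repl e.1).att f).map (fun v =>
            if hv : v ∈ (repl e.1).ext then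
              Sum.inl ((H.att e.1).get ⟨(repl e.1).ext.idxOf v,
                hlen e.1 e.2 ▸ List.idxOf_lt_length_iff.mpr hv⟩)
            else Sum.inr ⟨e, v, hv⟩)
      lab := fun x =>
        match x with
        | Sum.inl e' => H.lab e'.1
        | Sum.inr ⟨e, f⟩ => (repl e.1).lab f
      ext := H.ext.map Sum.inl
      ext_nodup := List.Nodup.map Sum.inl_injective H.ext_nodup }

end HGraph

/-!
Both sequential replacements and the simultaneous one are built from the same pieces: the
remaining nodes and edges of `H`, and the internal nodes and the edges of `R₁` and of `R₂`.
Once removing `e₁` and then `e₂` is identified with removing `{e₁, e₂}`, only the bracketing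
differs, `(H ⊕ R₁) ⊕ R₂` against `H ⊕ Σ e ∈ {e₁, e₂}, R e`, so reassociating the sums and splitting the Σ-type into its two fibres is an isomorphism; it
respects attachments because a node of `Rᵢ` fused into `eᵢ` is sent to the same attachment
node of `H` either way.
-/

namespace Equiv

variable {α β : Type*} {a b : α}

theorem sumElim_sigmaMk_pair_bijective {γ : α → Type*} (hab : a ≠ b) :
    Function.Bijective (Sum.elim
      (fun x : γ a => (⟨⟨a, Set.mem_insert a {b}⟩, x⟩ : Σ e : ({a, b} : Set α), γ e))
      (fun y : γ b => ⟨⟨b, Set.mem_insert_of_mem a rfl⟩, y⟩)) := by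
  have mk_injective {e} (he : e ∈ ({a, b} : Set α)) :
      Function.Injective (fun x : γ e => (⟨⟨e, he⟩, x⟩ : Σ e : ({a, b} : Set α), γ e)) :=
    fun _ _ h => eq_of_heq (Sigma.mk.inj_iff.mp h).2
  refine ⟨Sum.elim_injective.mpr ⟨mk_injective _, mk_injective _, ?_⟩, ?_⟩
  · exact fun _ _ h => hab (congrArg Subtype.val (Sigma.mk.inj_iff.mp h).1)
  · rintro ⟨⟨e, he⟩, x⟩
    rcases he with rfl | rfl
    exacts [⟨Sum.inl x, rfl⟩, ⟨Sum.inr x, rfl⟩]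

noncomputable def sigmaPair {γ : α → Type*} (hab : a ≠ b) :
    γ a ⊕ γ b ≃ Σ e : ({a, b} : Set α), γ e :=
  ofBijective _ (sumElim_sigmaMk_pair_bijective hab)

noncomputable def sumSumSigmaPair (δ : Type*) {γ : α → Type*} (hab : a ≠ b) :
    (δ ⊕ γ a) ⊕ γ b ≃ δ ⊕ Σ e : ({a, b} : Set α), γ e :=
  (sumAssoc _ _ _).trans (sumCongr (Equiv.refl δ) (sigmaPair hab))

def subtypeSumNeInl (hba : b ≠ a) :
    {x : {a' // a' ≠ a} ⊕ β // x ≠ Sum.inl ⟨b, hba⟩} ≃ {a' // a' ∉ ({a, b} : Set α)} ⊕ β where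
  toFun
    | ⟨.inl a', h⟩ => .inl ⟨a', by
        rintro (h' | h')
        exacts [a'.2 h', h (congrArg Sum.inl (Subtype.ext h'))]⟩
    | ⟨.inr y, _⟩ => .inr y
  invFun
    | .inl a' => ⟨.inl ⟨a', fun h => a'.2 (.inl h)⟩,
        fun h => a'.2 (.inr (congrArg Subtype.val (Sum.inl.inj h)))⟩
    | .inr y => ⟨.inr y, Sum.inr_ne_inl⟩
  left_inv := by rintro ⟨_ | _, _⟩ <;> rfl
  right_inv := by rintro (_ | _) <;> rfl

end Equiv

namespace HGraph

variable {C : Type}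

/-- The set `B` is left free so that the lemma also covers the order `e₂, e₁`, where it
is `{e₂, e₁}`. -/
theorem nonempty_iso_replace_replace_replaceSet (H : HGraph C) {e₁ e₂ : H.E} (hne : e₁ ≠ e₂)
    (repl : H.E → HGraph C) (h₁ : (repl e₁).ext.length = (H.att e₁).length)
    (h₂' : (repl e₂).ext.length =
      ((H.replace e₁ (repl e₁) h₁).att (Sum.inl ⟨e₂, hne.symm⟩)).length)
    {B : Set H.E} (hB : B = {e₁, e₂})
    (hlen : ∀ e ∈ B, (repl e).ext.length = (H.att e).length) :
    Nonempty (Iso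
      ((H.replace e₁ (repl e₁) h₁).replace (Sum.inl ⟨e₂, hne.symm⟩) (repl e₂) h₂')
      (H.replaceSet B repl hlen)) := by
  subst hB
  let vEquiv := Equiv.sumSumSigmaPair H.V
    (γ := fun e => {v : (repl e).V // v ∉ (repl e).ext}) hne
  let eEquiv := (Equiv.sumCongr (Equiv.subtypeSumNeInl hne.symm) (Equiv.refl _)).trans
    (Equiv.sumSumSigmaPair _ (γ := fun e => (repl e).E) hne)
  refine ⟨⟨vEquiv, eEquiv, ?_, ?_, ?_⟩⟩
  · rintro ((⟨⟨e, he⟩ | f, hf⟩) | g)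
    · exact List.map_map.trans (List.map_map.trans (List.map_congr_left fun _ _ => rfl))
    all_goals
      simp only [replace, replaceSet, List.map_map]
      refine List.map_congr_left fun v _ => ?_
      split_ifs with hv <;>
        simp only [Function.comp_apply, hv, ↓reduceDIte, List.get_eq_getElem, List.getElem_map] <;>
        rfl
  · rintro ((⟨⟨e, he⟩ | f, hf⟩) | g) <;> rfl
  · simp only [replace, replaceSet, List.map_map]
    rfl

end HGraph

/-- Confluence of hyperedge replacement: if `e₁ ≠ e₂` are
hyperedges of `H` and `R₁, R₂` have matching types, then replacing `e₁` first
and then `e₂` yields the same hypergraph (up to isomorphism) as replacing `e₂`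
first and then `e₁`, and both are isomorphic to the simultaneous replacement
`H[e₁/R₁, e₂/R₂]`.  (After replacing `eᵢ`, the copy of the other hyperedge is
`Sum.inl ⟨eⱼ, _⟩`.) -/
theorem replace_confluent {C : Type} (H : HGraph C) (e₁ e₂ : H.E)
    (hne : e₁ ≠ e₂) (R₁ R₂ : HGraph C)
    (h₁ : R₁.ext.length = (H.att e₁).length)
    (h₂ : R₂.ext.length = (H.att e₂).length)
    (h₂' : R₂.ext.length = ((H.replace e₁ R₁ h₁).att (Sum.inl ⟨e₂, hne.symm⟩)).length)
    (h₁' : R₁.ext.length = ((H.replace e₂ R₂ h₂).att (Sum.inl ⟨e₁, hne⟩)).length)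
    (repl : H.E → HGraph C) (hr₁ : repl e₁ = R₁) (hr₂ : repl e₂ = R₂)
    (hlen : ∀ e ∈ ({e₁, e₂} : Set H.E), (repl e).ext.length = (H.att e).length) :
    Nonempty (HGraph.Iso
      ((H.replace e₁ R₁ h₁).replace (Sum.inl ⟨e₂, hne.symm⟩) R₂ h₂')
      ((H.replace e₂ R₂ h₂).replace (Sum.inl ⟨e₁, hne⟩) R₁ h₁')) ∧
    Nonempty (HGraph.Iso
      ((H.replace e₁ R₁ h₁).replace (Sum.inl ⟨e₂, hne.symm⟩) R₂ h₂')
      (H.replaceSet {e₁, e₂} repl hlen)) ∧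
    Nonempty (HGraph.Iso
      ((H.replace e₂ R₂ h₂).replace (Sum.inl ⟨e₁, hne⟩) R₁ h₁')
      (H.replaceSet {e₁, e₂} repl hlen)) := by
  subst hr₁ hr₂
  obtain ⟨i₁₂⟩ := H.nonempty_iso_replace_replace_replaceSet hne repl h₁ h₂' rfl hlen
  obtain ⟨i₂₁⟩ :=
    H.nonempty_iso_replace_replace_replaceSet hne.symm repl h₂ h₁' (Set.pair_comm e₁ e₂) hlen
  exact ⟨⟨i₁₂.trans i₂₁.symm⟩, ⟨i₁₂⟩, ⟨i₂₁⟩⟩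
end

section
/- Chomsky normal form transformation step (rhs splitting): if p = (A, R) has k > 2 hyperedges in R, let X be the subgraph of R induced by hyperedges e₂,…,e_k and their attachment nodes, introduce a fresh non-terminal T of type equal to type(X) with external nodes the union of attachments of e₂,…,e_k, and let R' be R with e₂,…,e_k replaced by a single T-labelled hyperedge e_T. Then replacing p by the two productions p' = (A, R') and p'' = (T, X) yields a grammar generating the same language, because R = R'[e_T/X]. -/
namespace HGraph

variable {C : Type}

/-!
Both inclusions rest on the context-freeness of hyperedge replacement. A step with `(A, R)` is
simulated by a step with `(A, R')` followed by the expansion of `e_T` with `(T, X)`, because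
`H[e/R] ≅ H[e/R'][e_T/X]` (associativity of replacement). Conversely, along a derivation in the
new grammar we track the graph obtained by expanding every `T`-labelled hyperedge with `X`:
replacements at distinct hyperedges commute, so this expansion is derivable in the original
grammar, and for a terminal graph, which has no `T`-labelled hyperedges, it is the graph itself
up to isomorphism.
-/

/- Inclusions of the nodes and hyperedges of `H` and `R` into `H[e/R]`, typed by the replaced graph
rather than by the underlying sum types, so that rewriting along them stays well-typed. -/

section Replace

variable (H : HGraph C) (e : H.E) (R : HGraph C) (hlen : R.ext.length = (H.att e).length)

def replaceInl (v : H.V) : (H.replace e R hlen).V := Sum.inl v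

-- `replace` decides membership classically; matching it makes `replace_att_edgeInr` hold by `rfl`
open scoped Classical in
noncomputable def replaceEmb (v : R.V) : (H.replace e R hlen).V :=
  if hv : v ∈ R.ext then
    Sum.inl ((H.att e).get ⟨R.ext.idxOf v, hlen ▸ List.idxOf_lt_length_iff.mpr hv⟩)
  else Sum.inr ⟨v, hv⟩

def replaceEdgeInl (f : {f : H.E // f ≠ e}) : (H.replace e R hlen).E := Sum.inl f

def replaceEdgeInr (f : R.E) : (H.replace e R hlen).E := Sum.inr f

lemma replace_att_edgeInl (f : {f : H.E // f ≠ e}) :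
    (H.replace e R hlen).att (H.replaceEdgeInl e R hlen f) =
      (H.att f).map (H.replaceInl e R hlen) := rfl

lemma replace_att_edgeInr (f : R.E) :
    (H.replace e R hlen).att (H.replaceEdgeInr e R hlen f) =
      (R.att f).map (H.replaceEmb e R hlen) := rfl

lemma length_att_edgeInl (f : {f : H.E // f ≠ e}) :
    ((H.replace e R hlen).att (H.replaceEdgeInl e R hlen f)).length = (H.att f).length :=
  List.length_map _

lemma length_att_edgeInr (f : R.E) :
    ((H.replace e R hlen).att (H.replaceEdgeInr e R hlen f)).length = (R.att f).length :=
  List.length_map _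

lemma length_replace_ext : (H.replace e R hlen).ext.length = H.ext.length := List.length_map _

lemma replace_ext : (H.replace e R hlen).ext = H.ext.map (H.replaceInl e R hlen) := rfl

lemma replaceInl_mem_ext_iff (v : H.V) :
    H.replaceInl e R hlen v ∈ (H.replace e R hlen).ext ↔ v ∈ H.ext :=
  List.mem_map_of_injective Sum.inl_injective

lemma replace_inr_not_mem_ext (v : {v : R.V // v ∉ R.ext}) :
    (Sum.inr v : (H.replace e R hlen).V) ∉ (H.replace e R hlen).ext := by
  rw [replace_ext]
  intro hm
  obtain ⟨w, -, hw⟩ := List.mem_map.mp hm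
  exact Sum.inl_ne_inr hw

lemma replaceEmb_of_not_mem {v : R.V} (hv : v ∉ R.ext) :
    H.replaceEmb e R hlen v = Sum.inr ⟨v, hv⟩ := dif_neg hv

lemma replaceEmb_getElem_ext (i : ℕ) (hi : i < R.ext.length) :
    H.replaceEmb e R hlen R.ext[i] = H.replaceInl e R hlen ((H.att e)[i]'(hlen ▸ hi)) := by
  classical
  simp only [replaceEmb, List.get_eq_getElem, R.ext_nodup.idxOf_getElem i hi]
  exact dif_pos (List.getElem_mem hi)

end Replace

namespace Iso

variable {H K : HGraph C}

lemma length_att (i : Iso H K) (e : H.E) : (K.att (i.eEquiv e)).length = (H.att e).length := by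
  rw [← i.att_eq, List.length_map]

lemma length_ext (i : Iso H K) : K.ext.length = H.ext.length := by
  rw [← i.ext_eq, List.length_map]

lemma mem_ext_iff (i : Iso H K) (v : H.V) : i.vEquiv v ∈ K.ext ↔ v ∈ H.ext := by
  rw [← i.ext_eq]
  exact List.mem_map_of_injective i.vEquiv.injective

lemma vEquiv_getElem_ext (i : Iso H K) (k : ℕ) (hk : k < H.ext.length) :
    i.vEquiv H.ext[k] = K.ext[k]'(i.length_ext ▸ hk) := by
  simp only [← i.ext_eq, List.getElem_map]

lemma vEquiv_getElem_att (i : Iso H K) (e : H.E) (k : ℕ) (hk : k < (H.att e).length) :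
    i.vEquiv (H.att e)[k] = (K.att (i.eEquiv e))[k]'(i.length_att e ▸ hk) := by
  simp only [← i.att_eq, List.getElem_map]

end Iso

noncomputable def replaceCongrRight {H : HGraph C} (e : H.E) {R₁ R₂ : HGraph C} (i : Iso R₁ R₂)
    (h₁ : R₁.ext.length = (H.att e).length) (h₂ : R₂.ext.length = (H.att e).length) :
    Iso (H.replace e R₁ h₁) (H.replace e R₂ h₂) where
  vEquiv := Equiv.sumCongr (Equiv.refl _)
    (i.vEquiv.subtypeEquiv fun v => (i.mem_ext_iff v).not.symm)
  eEquiv := Equiv.sumCongr (Equiv.refl _) i.eEquiv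
  att_eq := by
    rintro (f | f)
    · change ((H.att f).map (H.replaceInl e R₁ h₁)).map _ =
        (H.att f).map (H.replaceInl e R₂ h₂)
      rw [List.map_map]
      rfl
    · change ((R₁.att f).map (H.replaceEmb e R₁ h₁)).map _ =
        (R₂.att (i.eEquiv f)).map (H.replaceEmb e R₂ h₂)
      rw [← i.att_eq, List.map_map, List.map_map]
      refine List.map_congr_left fun v _ => ?_
      by_cases hv : v ∈ R₁.ext
      · obtain ⟨k, hk, rfl⟩ := List.mem_iff_getElem.mp hv
        simp only [Function.comp_apply, replaceEmb_getElem_ext, i.vEquiv_getElem_ext]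
        rfl
      · simp only [Function.comp_apply, replaceEmb_of_not_mem _ _ _ _ hv,
          replaceEmb_of_not_mem _ _ _ _ ((i.mem_ext_iff v).not.mpr hv)]
        rfl
  lab_eq := by
    rintro (f | f)
    · rfl
    · exact i.lab_eq f
  ext_eq := by
    rw [replace_ext, replace_ext, List.map_map]
    rfl

noncomputable def replaceCongrLeft {H₁ H₂ : HGraph C} (i : Iso H₁ H₂) (e : H₁.E) (R : HGraph C)
    (h₁ : R.ext.length = (H₁.att e).length) (h₂ : R.ext.length = (H₂.att (i.eEquiv e)).length) :
    Iso (H₁.replace e R h₁) (H₂.replace (i.eEquiv e) R h₂) where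
  vEquiv := Equiv.sumCongr i.vEquiv (Equiv.refl _)
  eEquiv := Equiv.sumCongr (i.eEquiv.subtypeEquiv fun _ => i.eEquiv.injective.ne_iff.symm)
    (Equiv.refl _)
  att_eq := by
    rintro (f | f)
    · change ((H₁.att f).map (H₁.replaceInl e R h₁)).map _ =
        (H₂.att (i.eEquiv f)).map (H₂.replaceInl (i.eEquiv e) R h₂)
      rw [← i.att_eq, List.map_map, List.map_map]
      rfl
    · change ((R.att f).map (H₁.replaceEmb e R h₁)).map _ =
        (R.att f).map (H₂.replaceEmb (i.eEquiv e) R h₂)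
      rw [List.map_map]
      refine List.map_congr_left fun v _ => ?_
      by_cases hv : v ∈ R.ext
      · obtain ⟨k, hk, rfl⟩ := List.mem_iff_getElem.mp hv
        simp only [Function.comp_apply, replaceEmb_getElem_ext]
        exact congrArg Sum.inl (i.vEquiv_getElem_att e k _)
      · simp only [Function.comp_apply, replaceEmb_of_not_mem _ _ _ _ hv]
        rfl
  lab_eq := by
    rintro (f | f)
    · exact i.lab_eq f
    · rfl
  ext_eq := by
    rw [replace_ext, replace_ext, ← i.ext_eq, List.map_map, List.map_map]
    rfl

section Assoc

variable (H : HGraph C) (e : H.E) (R X : HGraph C) (eT : R.E)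
  (h₁ : X.ext.length = (R.att eT).length)
  (h₂ : (R.replace eT X h₁).ext.length = (H.att e).length)
  (h₃ : R.ext.length = (H.att e).length)
  (h₄ : X.ext.length = ((H.replace e R h₃).att (H.replaceEdgeInr e R h₃ eT)).length)

def replaceAssocVEquiv :
    (H.replace e (R.replace eT X h₁) h₂).V ≃
      ((H.replace e R h₃).replace (H.replaceEdgeInr e R h₃ eT) X h₄).V where
  toFun
    | Sum.inl v => Sum.inl (Sum.inl v)
    | Sum.inr ⟨Sum.inl v, hv⟩ =>
        Sum.inl (Sum.inr ⟨v, fun hm => hv ((R.replaceInl_mem_ext_iff eT X h₁ v).mpr hm)⟩)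
    | Sum.inr ⟨Sum.inr x, _⟩ => Sum.inr x
  invFun
    | Sum.inl (Sum.inl v) => Sum.inl v
    | Sum.inl (Sum.inr ⟨v, hv⟩) =>
        Sum.inr ⟨Sum.inl v, fun hm => hv ((R.replaceInl_mem_ext_iff eT X h₁ v).mp hm)⟩
    | Sum.inr x => Sum.inr ⟨Sum.inr x, R.replace_inr_not_mem_ext eT X h₁ x⟩
  left_inv := by rintro (v | ⟨v | x, hv⟩) <;> rfl
  right_inv := by rintro ((v | ⟨v, hv⟩) | x) <;> rfl

lemma replaceAssocVEquiv_replaceEmb_replaceInl (w : R.V) :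
    replaceAssocVEquiv H e R X eT h₁ h₂ h₃ h₄
        (H.replaceEmb e (R.replace eT X h₁) h₂ (R.replaceInl eT X h₁ w)) =
      (H.replace e R h₃).replaceInl (H.replaceEdgeInr e R h₃ eT) X h₄ (H.replaceEmb e R h₃ w) := by
  by_cases hw : w ∈ R.ext
  · obtain ⟨k, hk, rfl⟩ := List.mem_iff_getElem.mp hw
    have hY : R.replaceInl eT X h₁ R.ext[k] =
        (R.replace eT X h₁).ext[k]'((R.length_replace_ext eT X h₁).symm ▸ hk) := by
      simp only [replace_ext, List.getElem_map]
    rw [hY, replaceEmb_getElem_ext, replaceEmb_getElem_ext]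
    rfl
  · have hY : R.replaceInl eT X h₁ w ∉ (R.replace eT X h₁).ext :=
      fun hm => hw ((R.replaceInl_mem_ext_iff eT X h₁ w).mp hm)
    rw [replaceEmb_of_not_mem _ _ _ _ hY, replaceEmb_of_not_mem _ _ _ _ hw]
    rfl

noncomputable def replaceAssoc :
    Iso (H.replace e (R.replace eT X h₁) h₂)
      ((H.replace e R h₃).replace (H.replaceEdgeInr e R h₃ eT) X h₄) where
  vEquiv := replaceAssocVEquiv H e R X eT h₁ h₂ h₃ h₄
  eEquiv :=
    { toFun
        | Sum.inl f => Sum.inl ⟨Sum.inl f, Sum.inl_ne_inr⟩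
        | Sum.inr (Sum.inl ⟨f, hf⟩) => Sum.inl ⟨Sum.inr f, fun h => hf (Sum.inr_injective h)⟩
        | Sum.inr (Sum.inr x) => Sum.inr x
      invFun
        | Sum.inl ⟨Sum.inl f, _⟩ => Sum.inl f
        | Sum.inl ⟨Sum.inr f, hf⟩ => Sum.inr (Sum.inl ⟨f, fun h => hf (congrArg Sum.inr h)⟩)
        | Sum.inr x => Sum.inr (Sum.inr x)
      left_inv := by rintro (f | ⟨f, hf⟩ | x) <;> rfl
      right_inv := by rintro (⟨f | f, hf⟩ | x) <;> rfl }
  att_eq := by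
    rintro (f | ⟨f, hf⟩ | x)
    · change ((H.att f).map (H.replaceInl e _ h₂)).map
          (replaceAssocVEquiv H e R X eT h₁ h₂ h₃ h₄) =
        ((H.att f).map (H.replaceInl e R h₃)).map
          ((H.replace e R h₃).replaceInl (H.replaceEdgeInr e R h₃ eT) X h₄)
      rw [List.map_map, List.map_map]
      rfl
    · change (((R.att f).map (R.replaceInl eT X h₁)).map (H.replaceEmb e _ h₂)).map
          (replaceAssocVEquiv H e R X eT h₁ h₂ h₃ h₄) =
        ((R.att f).map (H.replaceEmb e R h₃)).map
          ((H.replace e R h₃).replaceInl (H.replaceEdgeInr e R h₃ eT) X h₄)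
      rw [List.map_map, List.map_map, List.map_map]
      exact List.map_congr_left fun w _ => replaceAssocVEquiv_replaceEmb_replaceInl ..
    · change (((X.att x).map (R.replaceEmb eT X h₁)).map (H.replaceEmb e _ h₂)).map
          (replaceAssocVEquiv H e R X eT h₁ h₂ h₃ h₄) =
        (X.att x).map ((H.replace e R h₃).replaceEmb (H.replaceEdgeInr e R h₃ eT) X h₄)
      rw [List.map_map, List.map_map]
      refine List.map_congr_left fun u _ => ?_
      by_cases hu : u ∈ X.ext
      · obtain ⟨k, hk, rfl⟩ := List.mem_iff_getElem.mp hu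
        simp only [Function.comp_apply, replaceEmb_getElem_ext,
          replaceAssocVEquiv_replaceEmb_replaceInl, replace_att_edgeInr, List.getElem_map]
      · rw [Function.comp_apply, Function.comp_apply, replaceEmb_of_not_mem _ _ _ _ hu,
          replaceEmb_of_not_mem _ _ _ _ hu,
          replaceEmb_of_not_mem _ _ _ _ (R.replace_inr_not_mem_ext eT X h₁ ⟨u, hu⟩)]
        rfl
  lab_eq := by rintro (f | ⟨f, hf⟩ | x) <;> rfl
  ext_eq := by
    change (H.ext.map (H.replaceInl e _ h₂)).map (replaceAssocVEquiv H e R X eT h₁ h₂ h₃ h₄) =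
      (H.ext.map (H.replaceInl e R h₃)).map
        ((H.replace e R h₃).replaceInl (H.replaceEdgeInr e R h₃ eT) X h₄)
    rw [List.map_map, List.map_map]
    rfl

end Assoc

section Comm

variable (H : HGraph C) {e f : H.E} (hef : e ≠ f) (R Q : HGraph C)
  (h₁ : R.ext.length = (H.att e).length)
  (h₂ : Q.ext.length = ((H.replace e R h₁).att (H.replaceEdgeInl e R h₁ ⟨f, hef.symm⟩)).length)
  (h₃ : Q.ext.length = (H.att f).length)
  (h₄ : R.ext.length = ((H.replace f Q h₃).att (H.replaceEdgeInl f Q h₃ ⟨e, hef⟩)).length)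

def replaceCommVFun :
    ((H.replace e R h₁).replace (H.replaceEdgeInl e R h₁ ⟨f, hef.symm⟩) Q h₂).V →
      ((H.replace f Q h₃).replace (H.replaceEdgeInl f Q h₃ ⟨e, hef⟩) R h₄).V
  | Sum.inl (Sum.inl v) => Sum.inl (Sum.inl v)
  | Sum.inl (Sum.inr r) => Sum.inr r
  | Sum.inr q => Sum.inl (Sum.inr q)

def replaceCommEFun :
    ((H.replace e R h₁).replace (H.replaceEdgeInl e R h₁ ⟨f, hef.symm⟩) Q h₂).E →
      ((H.replace f Q h₃).replace (H.replaceEdgeInl f Q h₃ ⟨e, hef⟩) R h₄).E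
  | Sum.inl ⟨Sum.inl ⟨g, hge⟩, hgf⟩ =>
      Sum.inl ⟨Sum.inl ⟨g, fun h => hgf (by subst h; rfl)⟩,
        fun h => hge (congrArg Subtype.val (Sum.inl_injective h))⟩
  | Sum.inl ⟨Sum.inr r, _⟩ => Sum.inr r
  | Sum.inr q => Sum.inl ⟨Sum.inr q, Sum.inr_ne_inl⟩

noncomputable def replaceComm :
    Iso ((H.replace e R h₁).replace (H.replaceEdgeInl e R h₁ ⟨f, hef.symm⟩) Q h₂)
      ((H.replace f Q h₃).replace (H.replaceEdgeInl f Q h₃ ⟨e, hef⟩) R h₄) where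
  vEquiv :=
    { toFun := replaceCommVFun H hef R Q h₁ h₂ h₃ h₄
      invFun := replaceCommVFun H hef.symm Q R h₃ h₄ h₁ h₂
      left_inv := by rintro ((v | r) | q) <;> rfl
      right_inv := by rintro ((v | q) | r) <;> rfl }
  eEquiv :=
    { toFun := replaceCommEFun H hef R Q h₁ h₂ h₃ h₄
      invFun := replaceCommEFun H hef.symm Q R h₃ h₄ h₁ h₂
      left_inv := by rintro (⟨⟨g, hge⟩ | r, hgf⟩ | q) <;> rfl
      right_inv := by rintro (⟨⟨g, hgf⟩ | q, hge⟩ | r) <;> rfl }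
  att_eq := by
    rintro (⟨⟨g, hge⟩ | r, hgf⟩ | q)
    · change (((H.att g).map (H.replaceInl e R h₁)).map (HGraph.replaceInl _ _ Q h₂)).map
          (replaceCommVFun H hef R Q h₁ h₂ h₃ h₄) =
        ((H.att g).map (H.replaceInl f Q h₃)).map (HGraph.replaceInl _ _ R h₄)
      rw [List.map_map, List.map_map, List.map_map]
      rfl
    · change (((R.att r).map (H.replaceEmb e R h₁)).map (HGraph.replaceInl _ _ Q h₂)).map
          (replaceCommVFun H hef R Q h₁ h₂ h₃ h₄) =
        (R.att r).map (HGraph.replaceEmb _ _ R h₄)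
      rw [List.map_map, List.map_map]
      refine List.map_congr_left fun v _ => ?_
      by_cases hv : v ∈ R.ext
      · obtain ⟨k, hk, rfl⟩ := List.mem_iff_getElem.mp hv
        simp only [Function.comp_apply, replaceEmb_getElem_ext, replace_att_edgeInl,
          List.getElem_map]
        rfl
      · rw [Function.comp_apply, Function.comp_apply, replaceEmb_of_not_mem _ _ _ _ hv,
          replaceEmb_of_not_mem _ _ _ _ hv]
        rfl
    · change ((Q.att q).map (HGraph.replaceEmb _ _ Q h₂)).map
          (replaceCommVFun H hef R Q h₁ h₂ h₃ h₄) =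
        ((Q.att q).map (H.replaceEmb f Q h₃)).map (HGraph.replaceInl _ _ R h₄)
      rw [List.map_map, List.map_map]
      refine List.map_congr_left fun u _ => ?_
      by_cases hu : u ∈ Q.ext
      · obtain ⟨k, hk, rfl⟩ := List.mem_iff_getElem.mp hu
        simp only [Function.comp_apply, replaceEmb_getElem_ext, replace_att_edgeInl,
          List.getElem_map]
        rfl
      · rw [Function.comp_apply, Function.comp_apply, replaceEmb_of_not_mem _ _ _ _ hu,
          replaceEmb_of_not_mem _ _ _ _ hu]
        rfl
  lab_eq := by rintro (⟨⟨g, hge⟩ | r, hgf⟩ | q) <;> rfl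
  ext_eq := by
    change ((H.ext.map (H.replaceInl e R h₁)).map (HGraph.replaceInl _ _ Q h₂)).map
        (replaceCommVFun H hef R Q h₁ h₂ h₃ h₄) =
      (H.ext.map (H.replaceInl f Q h₃)).map (HGraph.replaceInl _ _ R h₄)
    rw [List.map_map, List.map_map, List.map_map]
    rfl

end Comm

section Derivations

variable {P : Set (C × HGraph C)} {H K K' : HGraph C}

lemma IsRepl.of_iso {e : H.E} {R : HGraph C} (h : IsRepl H e R K) (i : Iso K' K) :
    IsRepl H e R K' :=
  let ⟨hlen, ⟨j⟩⟩ := h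
  ⟨hlen, ⟨i.trans j⟩⟩

lemma Step.of_iso (h : Step P H K) (i : Iso K' K) : Step P H K' :=
  let ⟨p, hp, e, hlab, hrepl⟩ := h
  ⟨p, hp, e, hlab, hrepl.of_iso i⟩

lemma transGen_step_of_iso (h : Relation.TransGen (Step P) H K) (i : Iso K' K) :
    Relation.TransGen (Step P) H K' := by
  obtain ⟨M, hM, hstep⟩ := Relation.TransGen.tail'_iff.mp h
  exact Relation.TransGen.tail' hM (hstep.of_iso i)

/-- Replacements at distinct hyperedges commute. -/
lemma IsRepl.exists_replace {f : H.E} {Y : HGraph C} (hK : IsRepl H f Y K) {e : H.E}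
    (hef : e ≠ f) (Q : HGraph C) (hl : Q.ext.length = (H.att e).length) :
    ∃ (e' : K.E) (hl' : Q.ext.length = (K.att e').length), K.lab e' = H.lab e ∧
      IsRepl (H.replace e Q hl) (H.replaceEdgeInl e Q hl ⟨f, hef.symm⟩) Y (K.replace e' Q hl') := by
  obtain ⟨hlf, ⟨j⟩⟩ := hK
  have hl' : Q.ext.length = (K.att (j.symm.eEquiv (H.replaceEdgeInl f Y hlf ⟨e, hef⟩))).length := by
    rw [j.symm.length_att, length_att_edgeInl, hl]
  have hlf' :
      Y.ext.length = ((H.replace e Q hl).att (H.replaceEdgeInl e Q hl ⟨f, hef.symm⟩)).length := by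
    rw [length_att_edgeInl, hlf]
  have hl'' : Q.ext.length =
      ((H.replace f Y hlf).att (H.replaceEdgeInl f Y hlf ⟨e, hef⟩)).length := by
    rw [length_att_edgeInl, hl]
  exact ⟨_, hl', (j.symm.lab_eq _).symm, hlf',
    ⟨((replaceComm H hef Q Y hl hlf' hlf hl'').trans (replaceCongrLeft j.symm _ Q hl'' hl')).symm⟩⟩

/-- `Step` is closed under isomorphism of the target only; admitting isomorphisms as steps makes
the relation invariant on both sides. -/
def DerivesUpToIso (P : Set (C × HGraph C)) : HGraph C → HGraph C → Prop :=
  Relation.ReflTransGen fun H K => Step P H K ∨ Nonempty (Iso H K)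

lemma DerivesUpToIso.replace {P₀ : Set (C × HGraph C)} (h : DerivesUpToIso P₀ H K) (e : H.E)
    (he : ∀ p ∈ P₀, p.1 ≠ H.lab e) (Q : HGraph C) (hl : Q.ext.length = (H.att e).length) :
    ∃ (e₀ : K.E) (hl₀ : Q.ext.length = (K.att e₀).length), K.lab e₀ = H.lab e ∧
      DerivesUpToIso P₀ (H.replace e Q hl) (K.replace e₀ Q hl₀) := by
  induction h using Relation.ReflTransGen.head_induction_on with
  | refl => exact ⟨e, hl, rfl, Relation.ReflTransGen.refl⟩
  | @head H b hstep _ ih =>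
    rcases hstep with ⟨p, hp, f, hlab, hrepl⟩ | ⟨⟨i⟩⟩
    · have hef : e ≠ f := fun h => he p hp (h ▸ hlab.symm)
      obtain ⟨e', hl', hlab', hrepl'⟩ := hrepl.exists_replace hef Q hl
      obtain ⟨e₀, hl₀, hlab₀, hd⟩ := ih e' (hlab' ▸ he) hl'
      exact ⟨e₀, hl₀, hlab₀.trans hlab',
        Relation.ReflTransGen.head
          (Or.inl ⟨p, hp, H.replaceEdgeInl e Q hl ⟨f, hef.symm⟩, hlab, hrepl'⟩) hd⟩
    · have hl' : Q.ext.length = (b.att (i.eEquiv e)).length := by rw [i.length_att, hl]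
      obtain ⟨e₀, hl₀, hlab₀, hd⟩ := ih (i.eEquiv e) (i.lab_eq e ▸ he) hl'
      exact ⟨e₀, hl₀, hlab₀.trans (i.lab_eq e).symm,
        Relation.ReflTransGen.head (Or.inr ⟨replaceCongrLeft i e Q hl hl'⟩) hd⟩

def LabelFree (T : C) (H : HGraph C) : Prop := ∀ e : H.E, H.lab e ≠ T

lemma LabelFree.of_iso {T : C} (h : LabelFree T H) (i : Iso H K) : LabelFree T K :=
  fun e he => h _ ((i.symm.lab_eq e).symm.trans he)

lemma LabelFree.replace {T : C} {e : H.E} {R : HGraph C} {hl : R.ext.length = (H.att e).length}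
    (hH : LabelFree T H) (hR : LabelFree T R) : LabelFree T (H.replace e R hl) := by
  rintro (f | f)
  exacts [hH f, hR f]

lemma DerivesUpToIso.nonempty_iso {T : C} {X : HGraph C} (h : DerivesUpToIso {(T, X)} H K)
    (hH : LabelFree T H) : Nonempty (Iso H K) := by
  induction h using Relation.ReflTransGen.head_induction_on with
  | refl => exact ⟨Iso.refl _⟩
  | head hstep _ ih =>
    rcases hstep with ⟨p, rfl, f, hlab, -⟩ | ⟨⟨i⟩⟩
    · exact absurd hlab (hH f)
    · obtain ⟨j⟩ := ih (hH.of_iso i)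
      exact ⟨i.trans j⟩

lemma DerivesUpToIso.replace_of_lab_eq {T : C} {X : HGraph C}
    (h : DerivesUpToIso {(T, X)} H K) (hK : LabelFree T K) (e : H.E) (he : H.lab e = T)
    (hl : X.ext.length = (H.att e).length) : DerivesUpToIso {(T, X)} (H.replace e X hl) K := by
  induction h using Relation.ReflTransGen.head_induction_on with
  | refl => exact absurd he (hK e)
  | @head H b hstep hbK ih =>
    rcases hstep with ⟨p, rfl, f, hlab, hrepl⟩ | ⟨⟨i⟩⟩
    · by_cases hef : e = f
      · subst hef
        obtain ⟨_, ⟨j⟩⟩ := hrepl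
        exact Relation.ReflTransGen.head (Or.inr ⟨j.symm⟩) hbK
      · obtain ⟨e', hl', hlab', hrepl'⟩ := hrepl.exists_replace hef X hl
        exact Relation.ReflTransGen.head
          (Or.inl ⟨(T, X), rfl, H.replaceEdgeInl e X hl ⟨f, Ne.symm hef⟩, hlab, hrepl'⟩)
          (ih e' (hlab'.trans he) hl')
    · have hl' : X.ext.length = (b.att (i.eEquiv e)).length := by rw [i.length_att, hl]
      exact Relation.ReflTransGen.head (Or.inr ⟨replaceCongrLeft i e X hl hl'⟩)
        (ih (i.eEquiv e) ((i.lab_eq e).symm.trans he) hl')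

end Derivations

section Splitting

variable {P : Set (C × HGraph C)} {A T : C} {R R' X : HGraph C} {eT : R'.E}
  {hlen : X.ext.length = (R'.att eT).length}

lemma isRepl_replace_of_iso (j : Iso R (R'.replace eT X hlen)) {H : HGraph C} {e : H.E}
    (hl : R'.ext.length = (H.att e).length) (hlR : R.ext.length = (H.att e).length) :
    IsRepl (H.replace e R' hl) (H.replaceEdgeInr e R' hl eT) X (H.replace e R hlR) := by
  have h₂ : (R'.replace eT X hlen).ext.length = (H.att e).length := by
    rw [length_replace_ext, hl]
  have h₄ : X.ext.length = ((H.replace e R' hl).att (H.replaceEdgeInr e R' hl eT)).length := by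
    rw [length_att_edgeInr, hlen]
  exact ⟨h₄, ⟨(replaceCongrRight e j hlR h₂).trans (replaceAssoc H e R' X eT hlen h₂ hl h₄)⟩⟩

lemma Derives.split (j : Iso R (R'.replace eT X hlen)) (hlabT : R'.lab eT = T) {H K : HGraph C}
    (hd : Derives P H K) : Derives ((P \ {(A, R)}) ∪ {(A, R'), (T, X)}) H K := by
  have hRR' : R.ext.length = R'.ext.length := j.length_ext.symm.trans (length_replace_ext ..)
  induction hd with
  | refl => exact Relation.ReflTransGen.refl
  | @tail b c _ hstep ih =>
    obtain ⟨q, hq, e, hlab, hrepl⟩ := hstep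
    by_cases hqR : q = (A, R)
    · subst hqR
      obtain ⟨hlR, ⟨i⟩⟩ := hrepl
      have hl : R'.ext.length = (b.att e).length := hRR' ▸ hlR
      refine (ih.tail ⟨(A, R'), by simp, e, hlab, hl, ⟨Iso.refl _⟩⟩).tail ?_
      exact ⟨(T, X), by simp, b.replaceEdgeInr e R' hl eT, hlabT,
        (isRepl_replace_of_iso j hl hlR).of_iso i⟩
    · exact ih.tail ⟨q, Or.inl ⟨hq, hqR⟩, e, hlab, hrepl⟩

lemma exists_expansion_replace (hfresh : ∀ q ∈ P, q.1 ≠ T ∧ LabelFree T q.2)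
    {H₀ b c K₁ : HGraph C} (hbK₁ : DerivesUpToIso {(T, X)} b K₁) (hK₁ : LabelFree T K₁)
    (hH₀K₁ : Relation.ReflTransGen (Step P) H₀ K₁) {e : b.E} {Q : HGraph C}
    (hQ : (b.lab e, Q) ∈ P) (hl : Q.ext.length = (b.att e).length)
    (hc : DerivesUpToIso {(T, X)} c (b.replace e Q hl)) :
    ∃ K₂, DerivesUpToIso {(T, X)} c K₂ ∧ LabelFree T K₂ ∧ Relation.TransGen (Step P) H₀ K₂ := by
  obtain ⟨hB, hQfree⟩ := hfresh _ hQ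
  obtain ⟨e₀, hl₀, hlab₀, hd⟩ := hbK₁.replace e (by rintro _ rfl; exact hB.symm) Q hl
  have hstep : Step P K₁ (K₁.replace e₀ Q hl₀) := ⟨_, hQ, e₀, hlab₀, hl₀, ⟨Iso.refl _⟩⟩
  exact ⟨_, hc.trans hd, hK₁.replace hQfree, Relation.TransGen.tail' hH₀K₁ hstep⟩

/-- `K₁` is `K` with all its `T`-labelled hyperedges expanded by `X`; it is derivable in the
original grammar, by at least one step unless `K` is the start graph. -/
lemma exists_expansion_of_derives_split (hp : (A, R) ∈ P)
    (hfresh : ∀ q ∈ P, q.1 ≠ T ∧ LabelFree T q.2) (hlabT : R'.lab eT = T)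
    (j : Iso R (R'.replace eT X hlen)) {H₀ K : HGraph C} (hH₀ : LabelFree T H₀)
    (hd : Derives ((P \ {(A, R)}) ∪ {(A, R'), (T, X)}) H₀ K) :
    ∃ K₁, DerivesUpToIso {(T, X)} K K₁ ∧ LabelFree T K₁ ∧
      (K = H₀ ∧ K₁ = H₀ ∨ Relation.TransGen (Step P) H₀ K₁) := by
  have hRR' : R.ext.length = R'.ext.length := j.length_ext.symm.trans (length_replace_ext ..)
  induction hd with
  | refl => exact ⟨H₀, Relation.ReflTransGen.refl, hH₀, Or.inl ⟨rfl, rfl⟩⟩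
  | @tail b c _ hstep ih =>
    obtain ⟨K₁, hbK₁, hK₁, hH₀K₁⟩ := ih
    have hH₀K₁' : Relation.ReflTransGen (Step P) H₀ K₁ := by
      rcases hH₀K₁ with ⟨-, rfl⟩ | h
      exacts [Relation.ReflTransGen.refl, h.to_reflTransGen]
    obtain ⟨q, hq, e, hlab, hlq, ⟨i⟩⟩ := hstep
    rcases hq with ⟨hqP, hqR⟩ | rfl | rfl
    · obtain ⟨K₂, hcK₂, hK₂, hH₀K₂⟩ := exists_expansion_replace hfresh hbK₁ hK₁ hH₀K₁'
        (hlab ▸ hqP) hlq (Relation.ReflTransGen.single (Or.inr ⟨i⟩))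
      exact ⟨K₂, hcK₂, hK₂, Or.inr hH₀K₂⟩
    · have hlR : R.ext.length = (b.att e).length := hRR'.trans hlq
      have hcR : DerivesUpToIso {(T, X)} c (b.replace e R hlR) :=
        Relation.ReflTransGen.head (Or.inr ⟨i⟩) (Relation.ReflTransGen.single
          (Or.inl ⟨(T, X), rfl, b.replaceEdgeInr e R' hlq eT, hlabT,
            isRepl_replace_of_iso j hlq hlR⟩))
      obtain ⟨K₂, hcK₂, hK₂, hH₀K₂⟩ :=
        exists_expansion_replace hfresh hbK₁ hK₁ hH₀K₁' (hlab ▸ hp) hlR hcR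
      exact ⟨K₂, hcK₂, hK₂, Or.inr hH₀K₂⟩
    · refine ⟨K₁, Relation.ReflTransGen.head (Or.inr ⟨i⟩) (hbK₁.replace_of_lab_eq hK₁ e hlab hlq),
        hK₁, Or.inr ?_⟩
      rcases hH₀K₁ with ⟨rfl, -⟩ | h
      exacts [absurd hlab (hH₀ e), h]

end Splitting

end HGraph

open HGraph

theorem rhs_splitting_general {C : Type} (Tm : Set C)
    (P : Set (C × HGraph C)) (S : C) (tyS : ℕ)
    (A T : C) (R R' X : HGraph C) (hp : (A, R) ∈ P)
    (eT : R'.E) (hlabT : R'.lab eT = T)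
    (hlen : X.ext.length = (R'.att eT).length)
    (hiso : Nonempty (HGraph.Iso R (R'.replace eT X hlen)))
    (hfreshP : ∀ q ∈ P, q.1 ≠ T ∧ ∀ e : q.2.E, q.2.lab e ≠ T)
    (hTS : T ≠ S) (hTTm : T ∉ Tm) :
    HGraph.Lang ((P \ {(A, R)}) ∪ {(A, R'), (T, X)}) Tm S tyS
      = HGraph.Lang P Tm S tyS := by
  obtain ⟨j⟩ := hiso
  ext K
  constructor
  · rintro ⟨hd, hK⟩
    refine ⟨?_, hK⟩
    obtain ⟨K₁, hKK₁, -, hK₁⟩ :=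
      exists_expansion_of_derives_split hp hfreshP hlabT j (fun _ h => hTS h.symm) hd
    obtain ⟨i⟩ := hKK₁.nonempty_iso fun e he => hTTm (he ▸ hK e)
    rcases hK₁ with ⟨rfl, -⟩ | hK₁
    · exact Relation.ReflTransGen.refl
    · exact (transGen_step_of_iso hK₁ i).to_reflTransGen
  · rintro ⟨hd, hK⟩
    exact ⟨hd.split j hlabT, hK⟩

/-- Chomsky normal form transformation step (rhs splitting):
if `p = (A, R)` has more than two hyperedges in `R`, `T` is a fresh
non-terminal not occurring in the grammar, `X` is the subgraph consisting of
all but one hyperedge of `R`, and `R'` is `R` with those hyperedges replaced by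
a single `T`-labelled hyperedge `e_T` — so that `R ≅ R'[e_T/X]` — then
replacing `p` by the two productions `(A, R')` and `(T, X)` yields a grammar
generating the same language. -/
theorem rhs_splitting {C : Type} (Tm : Set C)
    (P : Set (C × HGraph C)) (S : C) (tyS : ℕ)
    (A T : C) (R R' X : HGraph C) (hp : (A, R) ∈ P)
    (hbig : 2 < Nat.card R.E)
    (eT : R'.E) (hlabT : R'.lab eT = T)
    (hlen : X.ext.length = (R'.att eT).length)
    (hiso : Nonempty (HGraph.Iso R (R'.replace eT X hlen)))
    (hfreshP : ∀ q ∈ P, q.1 ≠ T ∧ ∀ e : q.2.E, q.2.lab e ≠ T)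
    (hfreshR' : ∀ e : R'.E, e ≠ eT → R'.lab e ≠ T)
    (hfreshX : ∀ e : X.E, X.lab e ≠ T)
    (hTS : T ≠ S) (hTTm : T ∉ Tm) :
    HGraph.Lang ((P \ {(A, R)}) ∪ {(A, R'), (T, X)}) Tm S tyS
      = HGraph.Lang P Tm S tyS :=
  rhs_splitting_general Tm P S tyS A T R R' X hp eT hlabT hlen hiso hfreshP hTS hTTm
end
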